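/- Let M be a matroid, let 𝒞' be a perfect collection of circuits of M, and let 𝒞'' ⊆ 𝒞'. Then 𝒞'' is a perfect collection of circuits of M. -/

import Mathlib

open Set Matroid
open scoped Matroid

namespace PaperLift

variable {α : Type} {β : Type}

/-- A circuit of a matroid: a minimal dependent set. -/
def Circuit (M : Matroid α) (C : Set α) : Prop :=
  M.Dep C ∧ ∀ D, D ⊂ C → M.Indep D

/-- The rank of a set in a matroid: the supremum of cardinalities of independent subsets. -/
noncomputable def rk (M : Matroid α) (X : Set α) : ℕ :=
  sSup {n | ∃ I, M.Indep I ∧ I ⊆ X ∧ I.ncard = n}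

/-- The rank of a matroid. -/
noncomputable def rank (M : Matroid α) : ℕ := rk M M.E

/-- Deletion of a set from a matroid. -/
def delete (M : Matroid α) (D : Set α) : Matroid α := M ↾ (M.E \ D)

/-- Contraction of a set in a matroid, defined by duality. -/
noncomputable def contract (M : Matroid α) (C : Set α) : Matroid α := ((M✶) ↾ (M.E \ C))✶

/-- A hyperplane: a maximal proper flat. -/
def Hyperplane (M : Matroid α) (H : Set α) : Prop :=
  M.IsFlat H ∧ H ≠ M.E ∧ ∀ F, M.IsFlat F → H ⊂ F → F = M.E

/-- A circuit-hyperplane: a circuit that is also a hyperplane. -/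
def CircuitHyperplane (M : Matroid α) (C : Set α) : Prop :=
  Circuit M C ∧ Hyperplane M C

/-- `L` is a lift of `M`: there is a matroid `K` on a ground set `E ∪ F`, with `F` disjoint
from `E = M.E`, such that `M = K / F` and `L = K \ F` (up to the canonical embedding). -/
def IsLiftOf (L M : Matroid α) : Prop :=
  L.E = M.E ∧ ∃ (β : Type) (K : Matroid (α ⊕ β)) (F : Set (α ⊕ β)),
    Disjoint (Sum.inl '' M.E) F ∧ K.E = Sum.inl '' M.E ∪ F ∧
    contract K F = M.map Sum.inl Sum.inl_injective.injOn ∧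
    delete K F = L.map Sum.inl Sum.inl_injective.injOn

/-- `N`, a matroid whose ground set is the set of circuits of `M`, satisfies the lift
condition for `M`. -/
def LiftCondition (M : Matroid α) (N : Matroid (Set α)) : Prop :=
  N.E = {C | Circuit M C} ∧
  ∀ C₁ C₂, Circuit M C₁ → Circuit M C₂ →
    (C₁ ∪ C₂).ncard = rk M (C₁ ∪ C₂) + 2 →
    ∀ C, Circuit M C → C ⊆ C₁ ∪ C₂ → C ∈ N.closure {C₁, C₂}

/-- `L` has the rank function of the lift `M^N` of `M` constructed from `N`. -/
def IsLiftMatroid (M : Matroid α) (N : Matroid (Set α)) (L : Matroid α) : Prop :=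
  L.E = M.E ∧ ∀ X ⊆ M.E, rk L X = rk M X + rk N {C | Circuit M C ∧ C ⊆ X}

/-- Matroid isomorphism: a bijection between ground sets preserving independence
in both directions. -/
def Iso (M : Matroid α) (N : Matroid β) : Prop :=
  ∃ e : α → β, InjOn e M.E ∧ e '' M.E = N.E ∧ ∀ I ⊆ M.E, (M.Indep I ↔ N.Indep (e '' I))

/-- Representability of a matroid over a field `F`. -/
def Representable (M : Matroid α) (F : Type) [Field F] : Prop :=
  ∃ (W : Type) (_ : AddCommGroup W) (_ : Module F W) (φ : α → W),
    ∀ I ⊆ M.E, (M.Indep I ↔ InjOn φ I ∧ LinearIndependent F (fun e : I => φ e))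

/-- A rank-`r` matroid is sparse paving if every `r`-element subset of the ground set is
either a base or a circuit-hyperplane. -/
def SparsePaving (M : Matroid α) : Prop :=
  ∀ S ⊆ M.E, S.ncard = rank M → (M.IsBase S ∨ CircuitHyperplane M S)

/-- A perfect collection of circuits. -/
def Perfect (M : Matroid α) (Cs : Set (Set α)) : Prop :=
  Cs.Finite ∧ (∀ C ∈ Cs, Circuit M C) ∧
  (⋃₀ Cs).ncard = rk M (⋃₀ Cs) + Cs.ncard ∧
  ∀ C ∈ Cs, ¬ C ⊆ ⋃₀ (Cs \ {C})

/-- A linear class of circuits. -/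
def LinearClass (M : Matroid α) (𝒞 : Set (Set α)) : Prop :=
  (∀ C ∈ 𝒞, Circuit M C) ∧
  ∀ C₁ ∈ 𝒞, ∀ C₂ ∈ 𝒞, (C₁ ∪ C₂).ncard = rk M (C₁ ∪ C₂) + 2 →
    ∀ C, Circuit M C → C ⊆ C₁ ∪ C₂ → C ∈ 𝒞

/-- The circulant sets `C_i ⊆ [2t]` from the construction of `K(r,t)`. -/
def Ci (r t i : ℕ) : Set ℕ :=
  (fun k => (k + 2 * (i - 1) - 1) % (2 * t) + 1) '' (Set.Icc 1 (r - 2))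

/-- The family `𝒞'(r,t)`. -/
def CC' (r t : ℕ) : Set (Set ℕ) :=
  (fun i => Ci r t i ∪ {2 * t + 1, 2 * t + 2}) '' (Set.Icc 1 t)

/-- The family `𝒞''(r,t)`. -/
def CC'' (r t : ℕ) : Set (Set ℕ) :=
  (fun i => Ci r t i ∪ Ci r t (i + 1)) '' (Set.Icc 1 (t - 1))

/-- `K` is the matroid `K(r,t)`: a rank-`r` matroid on `[2t+2]` in which every `r`-element
subset is a base or a circuit-hyperplane, whose circuit-hyperplanes are exactly the members
of `𝒞'(r,t) ∪ 𝒞''(r,t)`. -/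
def IsKrt (r t : ℕ) (K : Matroid ℕ) : Prop :=
  K.E = Set.Icc 1 (2 * t + 2) ∧ rank K = r ∧
  (∀ S ⊆ K.E, S.ncard = r → (K.IsBase S ∨ CircuitHyperplane K S)) ∧
  (∀ S, CircuitHyperplane K S ↔ S ∈ CC' r t ∪ CC'' r t)

/-- A group partition: a partition of the non-identity elements such that each part
together with the identity is a subgroup. -/
def GroupPartition (Γ : Type) [Group Γ] (𝒜 : Set (Set Γ)) : Prop :=
  (∀ A ∈ 𝒜, A.Nonempty) ∧ (⋃₀ 𝒜 = {(1 : Γ)}ᶜ) ∧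
  (∀ A ∈ 𝒜, ∀ B ∈ 𝒜, A ≠ B → Disjoint A B) ∧
  (∀ A ∈ 𝒜, ∃ H : Subgroup Γ, (H : Set Γ) = insert 1 A)


end PaperLift

/-! Write `n(X) = |X| - r(X)` for the nullity. If a circuit `C` is not contained in `Y`, pick
`e ∈ C \ Y`; since `e` lies in the closure of `C - e`, adding `C` to `Y` raises the rank by at
most `|C \ Y| - 1`, so it raises the nullity by at least one. By induction, a finite family of
circuits none of which lies in the union of `Y` and the others raises `n(Y)` by at least its size.
Over `Y = ∅` this gives `n(⋃𝒞'') ≥ |𝒞''|`; over `Y = ⋃𝒞''` with the family `𝒞' \ 𝒞''` it gives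
`|𝒞'| = n(⋃𝒞') ≥ n(⋃𝒞'') + |𝒞' \ 𝒞''|`, hence `n(⋃𝒞'') = |𝒞''|`. -/

namespace Matroid

variable {α : Type*} {M : Matroid α} {C Y : Set α}

lemma IsCircuit.eRk_union_add_one_le (hC : M.IsCircuit C) (hCY : ¬ C ⊆ Y) :
    M.eRk (Y ∪ C) + 1 ≤ M.eRk Y + (C \ Y).encard := by
  obtain ⟨e, heC, heY⟩ := not_subset.mp hCY
  have hspan : M.eRk (Y ∪ C) = M.eRk (Y ∪ (C \ Y) \ {e}) := by
    rw [← eRk_union_closure_right_eq, ← hC.closure_sdiff_singleton_eq e,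
      eRk_union_closure_right_eq]
    congr 1
    ext x
    simp only [mem_union, mem_sdiff, mem_singleton_iff]
    tauto
  calc M.eRk (Y ∪ C) + 1 ≤ M.eRk Y + ((C \ Y) \ {e}).encard + 1 := by
        grw [hspan, eRk_union_le_eRk_add_encard]
    _ = M.eRk Y + (C \ Y).encard := by
        rw [add_assoc, encard_sdiff_singleton_add_one (show e ∈ C \ Y from ⟨heC, heY⟩)]

-- `n(Y) + |Ds| ≤ n(Y ∪ ⋃₀ Ds)` for `n = encard - eRk`, stated without subtraction.
lemma eRk_union_sUnion_add_encard_le (M : Matroid α) (Y : Set α) {Ds : Set (Set α)}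
    (hDs : Ds.Finite) (hcirc : ∀ C ∈ Ds, M.IsCircuit C)
    (hnew : ∀ C ∈ Ds, ¬ C ⊆ Y ∪ ⋃₀ (Ds \ {C})) :
    M.eRk (Y ∪ ⋃₀ Ds) + Ds.encard + Y.encard ≤ M.eRk Y + (Y ∪ ⋃₀ Ds).encard := by
  induction Ds, hDs using Set.Finite.induction_on with
  | empty => simp
  | @insert C Ds hCDs _ ih =>
    set Z := Y ∪ ⋃₀ Ds
    have hCZ : ¬ C ⊆ Z := by
      simpa [insert_sdiff_self_of_notMem hCDs] using hnew C (mem_insert C Ds)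
    have hZ : M.eRk Z + Ds.encard + Y.encard ≤ M.eRk Y + Z.encard := by
      refine ih (fun D hD => hcirc D (mem_insert_of_mem C hD)) fun D hD hDsub => ?_
      refine hnew D (mem_insert_of_mem C hD) (hDsub.trans ?_)
      gcongr
      exact subset_insert C Ds
    have hunion : Y ∪ ⋃₀ insert C Ds = Z ∪ C := by
      rw [sUnion_insert, union_comm C, ← union_assoc]
    calc M.eRk (Y ∪ ⋃₀ insert C Ds) + (insert C Ds).encard + Y.encard
        = (M.eRk (Z ∪ C) + 1) + (Ds.encard + Y.encard) := by
          rw [hunion, encard_insert_of_notMem hCDs]; ring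
      _ ≤ (M.eRk Z + (C \ Z).encard) + (Ds.encard + Y.encard) := by
          grw [(hcirc C (mem_insert C Ds)).eRk_union_add_one_le hCZ]
      _ = (M.eRk Z + Ds.encard + Y.encard) + (C \ Z).encard := by ring
      _ ≤ (M.eRk Y + Z.encard) + (C \ Z).encard := by grw [hZ]
      _ = M.eRk Y + (Y ∪ ⋃₀ insert C Ds).encard := by
          rw [hunion, add_assoc, add_comm Z.encard, encard_sdiff_add_encard, union_comm]

end Matroid

namespace PaperLift

variable {α : Type}

lemma circuit_iff_isCircuit {M : Matroid α} {C : Set α} : Circuit M C ↔ M.IsCircuit C :=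
  isCircuit_iff_forall_ssubset.symm

lemma rk_eq_ncard_of_isBasis' {M : Matroid α} {I X : Set α} (hX : X.Finite)
    (hI : M.IsBasis' I X) : rk M X = I.ncard := by
  refine IsGreatest.csSup_eq ⟨⟨I, hI.indep, hI.subset, rfl⟩, ?_⟩
  rintro n ⟨J, hJ, hJX, rfl⟩
  obtain ⟨J', hJ', hJJ'⟩ := hJ.subset_isBasis'_of_subset hJX
  calc J.ncard ≤ J'.ncard := ncard_le_ncard hJJ' (hX.subset hJ'.subset)
    _ = I.ncard := by rw [ncard_def, ncard_def, hJ'.encard_eq_encard hI]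

lemma cast_rk_eq_eRk (M : Matroid α) {X : Set α} (hX : X.Finite) : (rk M X : ℕ∞) = M.eRk X := by
  obtain ⟨I, hI⟩ := M.exists_isBasis' X
  rw [rk_eq_ncard_of_isBasis' hX hI, (hX.subset hI.subset).cast_ncard_eq, hI.encard_eq_eRk]

lemma rk_empty (M : Matroid α) : rk M ∅ = 0 := by
  simpa using cast_rk_eq_eRk M finite_empty

lemma rk_union_sUnion_add_ncard_le {M : Matroid α} {Y : Set α} {Ds : Set (Set α)}
    (hDs : Ds.Finite) (hfin : (Y ∪ ⋃₀ Ds).Finite) (hcirc : ∀ C ∈ Ds, Circuit M C)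
    (hnew : ∀ C ∈ Ds, ¬ C ⊆ Y ∪ ⋃₀ (Ds \ {C})) :
    rk M (Y ∪ ⋃₀ Ds) + Ds.ncard + Y.ncard ≤ rk M Y + (Y ∪ ⋃₀ Ds).ncard := by
  have hY := hfin.subset subset_union_left
  have h := M.eRk_union_sUnion_add_encard_le Y hDs
    (fun C hC => circuit_iff_isCircuit.1 (hcirc C hC)) hnew
  rw [← cast_rk_eq_eRk M hfin, ← cast_rk_eq_eRk M hY, ← hDs.cast_ncard_eq,
    ← hY.cast_ncard_eq, ← hfin.cast_ncard_eq] at h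
  exact_mod_cast h

/-- Every subset of a perfect collection of circuits is perfect. -/
theorem stmt14 {α : Type} (M : Matroid α) (hM : M.E.Finite)
    (Cs Cs' : Set (Set α)) (h : Perfect M Cs) (hsub : Cs' ⊆ Cs) :
    Perfect M Cs' := by
  obtain ⟨hfin, hcirc, hcard, hnew⟩ := h
  have hfin' := hfin.subset hsub
  have hU : (⋃₀ Cs).Finite := hM.subset (sUnion_subset fun C hC => (hcirc C hC).1.subset_ground)
  have hnew' : ∀ C ∈ Cs', ¬ C ⊆ ⋃₀ (Cs' \ {C}) := fun C hC hCsub =>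
    hnew C (hsub hC) (hCsub.trans (sUnion_mono (sdiff_subset_sdiff_left hsub)))
  refine ⟨hfin', fun C hC => hcirc C (hsub hC), ?_, hnew'⟩
  have hlower := rk_union_sUnion_add_ncard_le (Y := ∅) hfin'
    (by simpa using hU.subset (sUnion_mono hsub)) (fun C hC => hcirc C (hsub hC))
    (by simpa using hnew')
  have hnew_rest : ∀ C ∈ Cs \ Cs', ¬ C ⊆ ⋃₀ Cs' ∪ ⋃₀ ((Cs \ Cs') \ {C}) :=
    fun C hC hCsub => hnew C hC.1 <| hCsub.trans <| by
      rw [← sUnion_union]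
      refine sUnion_mono ?_
      rintro D (hD | ⟨⟨hD, -⟩, hDC⟩)
      · exact ⟨hsub hD, by rintro rfl; exact hC.2 hD⟩
      · exact ⟨hD, hDC⟩
  have hupper := rk_union_sUnion_add_ncard_le (hfin.sdiff (t := Cs'))
    (by rwa [← sUnion_union, union_sdiff_cancel hsub]) (fun C hC => hcirc C hC.1) hnew_rest
  rw [← sUnion_union, union_sdiff_cancel hsub] at hupper
  rw [← ncard_sdiff_add_ncard_of_subset hsub hfin] at hcard
  simp only [empty_union, rk_empty, ncard_empty, add_zero, zero_add] at hlower
  omega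

end PaperLift
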